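/- Let X = LRᵀ be balanced with compact SVD X = UΣVᵀ, L = UΣ^{1/2}, R = VΣ^{1/2}, and rank(X) = k. Then for any G ∈ ℝ^{m×n}, ‖GR‖_F² + ‖GᵀL‖_F² ≥ σ_k(X)·(‖GV‖_F² + ‖UᵀG‖_F²) ≥ σ_k(X)·‖GVVᵀ + UUᵀG − UUᵀGVVᵀ‖_F², where σ_k(X) is the k-th singular value of X. -/
import Mathlib


open Matrix

/-- Frobenius inner product of two real matrices. -/
def frobInner {m n : ℕ} (A B : Matrix (Fin m) (Fin n) ℝ) : ℝ := ∑ i, ∑ j, A i j * B i j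

/-- Frobenius norm of a real matrix. -/
noncomputable def frobNorm {m n : ℕ} (A : Matrix (Fin m) (Fin n) ℝ) : ℝ :=
  Real.sqrt (frobInner A A)

/-- Spectral norm (largest singular value) of a real matrix, as the operator norm
of the induced linear map between Euclidean spaces. -/
noncomputable def specNorm {m n : ℕ} (A : Matrix (Fin m) (Fin n) ℝ) : ℝ :=
  ‖LinearMap.toContinuousLinearMap (Matrix.toEuclideanLin A)‖

lemma frobInner_self_nonneg {m n : ℕ} (A : Matrix (Fin m) (Fin n) ℝ) :
    0 ≤ frobInner A A := by
  apply Finset.sum_nonneg; intro i _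
  apply Finset.sum_nonneg; intro j _
  exact mul_self_nonneg _

lemma frobNorm_sq {m n : ℕ} (A : Matrix (Fin m) (Fin n) ℝ) :
    frobNorm A ^ 2 = frobInner A A := Real.sq_sqrt (frobInner_self_nonneg A)

lemma frobInner_eq_trace {m n : ℕ} (A B : Matrix (Fin m) (Fin n) ℝ) :
    frobInner A B = (Aᵀ * B).trace := by
  simp [frobInner, Matrix.trace, Matrix.mul_apply, Matrix.diag]
  rw [Finset.sum_comm]

lemma frobInner_comm {m n : ℕ} (A B : Matrix (Fin m) (Fin n) ℝ) :
    frobInner A B = frobInner B A := by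
  simp [frobInner, mul_comm]

lemma frobInner_mulT {p q r : ℕ} (A : Matrix (Fin p) (Fin q) ℝ)
    (B : Matrix (Fin r) (Fin q) ℝ) (C : Matrix (Fin p) (Fin r) ℝ) :
    frobInner (A * Bᵀ) C = frobInner A (C * B) := by
  rw [frobInner_eq_trace, frobInner_eq_trace, Matrix.transpose_mul, Matrix.transpose_transpose,
    Matrix.mul_assoc, ← Matrix.mul_assoc Aᵀ C B, Matrix.trace_mul_comm]

lemma frobInner_mulL {p q r : ℕ} (B : Matrix (Fin p) (Fin q) ℝ)
    (A : Matrix (Fin q) (Fin r) ℝ) (C : Matrix (Fin p) (Fin r) ℝ) :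
    frobInner (B * A) C = frobInner A (Bᵀ * C) := by
  rw [frobInner_eq_trace, frobInner_eq_trace, Matrix.transpose_mul, Matrix.mul_assoc]

lemma frobInner_transpose {m n : ℕ} (A B : Matrix (Fin m) (Fin n) ℝ) :
    frobInner Aᵀ Bᵀ = frobInner A B := by
  simp [frobInner]
  rw [Finset.sum_comm]

lemma frobInner_expand {m n : ℕ} (s t w : Matrix (Fin m) (Fin n) ℝ) :
    frobInner (s + t - w) (s + t - w) =
      frobInner s s + frobInner t t + frobInner w w +
        2 * frobInner s t - 2 * frobInner s w - 2 * frobInner t w := by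
  simp only [frobInner, Finset.mul_sum, ← Finset.sum_add_distrib, ← Finset.sum_sub_distrib]
  apply Finset.sum_congr rfl; intro i _
  apply Finset.sum_congr rfl; intro j _
  simp only [Matrix.sub_apply, Matrix.add_apply]
  ring

/-- **Lower bound for the balanced gradient via the Riemannian gradient.** For a
balanced factorization `X = L Rᵀ` of a rank-`k` matrix with compact SVD
`X = U Σ Vᵀ` and smallest singular value `σk > 0`, for every `G`,
`‖G R‖_F² + ‖Gᵀ L‖_F² ≥ σk (‖G V‖_F² + ‖Uᵀ G‖_F²) ≥ σk ‖P_{U,V}(G)‖_F²`. -/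
theorem balanced_gradient_lower_bound
    {m n k : ℕ} (U : Matrix (Fin m) (Fin k) ℝ) (V : Matrix (Fin n) (Fin k) ℝ)
    (σ : Fin k → ℝ) (σk : ℝ)
    (hU : Uᵀ * U = 1) (hV : Vᵀ * V = 1)
    (hσk : 0 < σk) (hmin : ∀ i, σk ≤ σ i) (hmem : ∃ i, σ i = σk)
    (X : Matrix (Fin m) (Fin n) ℝ) (hX : X = U * Matrix.diagonal σ * Vᵀ)
    (L : Matrix (Fin m) (Fin k) ℝ) (hL : L = U * Matrix.diagonal (fun i => Real.sqrt (σ i)))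
    (R : Matrix (Fin n) (Fin k) ℝ) (hR : R = V * Matrix.diagonal (fun i => Real.sqrt (σ i)))
    (G : Matrix (Fin m) (Fin n) ℝ) :
    frobNorm (G * R) ^ 2 + frobNorm (Gᵀ * L) ^ 2 ≥
        σk * (frobNorm (G * V) ^ 2 + frobNorm (Uᵀ * G) ^ 2) ∧
    σk * (frobNorm (G * V) ^ 2 + frobNorm (Uᵀ * G) ^ 2) ≥
        σk * frobNorm (G * V * Vᵀ + U * Uᵀ * G - U * Uᵀ * G * V * Vᵀ) ^ 2 := by
  have hσnn : ∀ i, 0 ≤ σ i := fun i => le_trans hσk.le (hmin i)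
  constructor
  · rw [frobNorm_sq, frobNorm_sq, frobNorm_sq, frobNorm_sq, hL, hR,
      ← Matrix.mul_assoc, ← Matrix.mul_assoc]
    have key : ∀ (p : ℕ) (M : Matrix (Fin p) (Fin k) ℝ),
        σk * frobInner M M ≤ frobInner (M * Matrix.diagonal (fun i => Real.sqrt (σ i)))
          (M * Matrix.diagonal (fun i => Real.sqrt (σ i))) := by
      intro p M
      simp only [frobInner, Matrix.mul_diagonal, Finset.mul_sum]
      apply Finset.sum_le_sum; intro i _
      apply Finset.sum_le_sum; intro j _
      have h1 : M i j * Real.sqrt (σ j) * (M i j * Real.sqrt (σ j))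
          = σ j * (M i j * M i j) := by
        rw [mul_mul_mul_comm, Real.mul_self_sqrt (hσnn j)]; ring
      rw [h1]
      exact mul_le_mul_of_nonneg_right (hmin j) (mul_self_nonneg _)
    have h2 : frobInner (Uᵀ * G) (Uᵀ * G) = frobInner (Gᵀ * U) (Gᵀ * U) := by
      rw [← frobInner_transpose (Gᵀ * U), Matrix.transpose_mul, Matrix.transpose_transpose]
    rw [mul_add, h2]
    exact add_le_add (key m (G * V)) (key n (Gᵀ * U))
  · have hPeq : G * V * Vᵀ + U * Uᵀ * G - U * Uᵀ * G * V * Vᵀ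
        = G * V * Vᵀ + U * (Uᵀ * G) - U * (Uᵀ * G * V * Vᵀ) := by
      simp [Matrix.mul_assoc]
    have t1 : frobInner (G * V * Vᵀ) (G * V * Vᵀ) = frobInner (G * V) (G * V) := by
      rw [frobInner_mulT, Matrix.mul_assoc (G * V) Vᵀ V, hV, Matrix.mul_one]
    have t2 : frobInner (G * V * Vᵀ) (U * (Uᵀ * G))
        = frobInner (Uᵀ * G * V) (Uᵀ * G * V) := by
      rw [frobInner_mulT, Matrix.mul_assoc U (Uᵀ * G) V, frobInner_comm, frobInner_mulL,
        ← Matrix.mul_assoc]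
    have t3 : frobInner (G * V * Vᵀ) (U * (Uᵀ * G * V * Vᵀ))
        = frobInner (Uᵀ * G * V) (Uᵀ * G * V) := by
      rw [frobInner_mulT, Matrix.mul_assoc U (Uᵀ * G * V * Vᵀ) V,
        Matrix.mul_assoc (Uᵀ * G * V) Vᵀ V, hV, Matrix.mul_one,
        frobInner_comm, frobInner_mulL, ← Matrix.mul_assoc]
    have t5 : frobInner (U * (Uᵀ * G)) (U * (Uᵀ * G)) = frobInner (Uᵀ * G) (Uᵀ * G) := by
      rw [frobInner_mulL, ← Matrix.mul_assoc, hU, Matrix.one_mul]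
    have t6 : frobInner (U * (Uᵀ * G)) (U * (Uᵀ * G * V * Vᵀ))
        = frobInner (Uᵀ * G * V) (Uᵀ * G * V) := by
      rw [frobInner_mulL, ← Matrix.mul_assoc Uᵀ U, hU, Matrix.one_mul,
        frobInner_comm, frobInner_mulT]
    have t9 : frobInner (U * (Uᵀ * G * V * Vᵀ)) (U * (Uᵀ * G * V * Vᵀ))
        = frobInner (Uᵀ * G * V) (Uᵀ * G * V) := by
      rw [frobInner_mulL, ← Matrix.mul_assoc Uᵀ U, hU, Matrix.one_mul,
        frobInner_mulT, Matrix.mul_assoc (Uᵀ * G * V) Vᵀ V, hV, Matrix.mul_one]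
    have hPP : frobInner (G * V * Vᵀ + U * Uᵀ * G - U * Uᵀ * G * V * Vᵀ)
          (G * V * Vᵀ + U * Uᵀ * G - U * Uᵀ * G * V * Vᵀ)
        = frobInner (G * V) (G * V) + frobInner (Uᵀ * G) (Uᵀ * G)
            - frobInner (Uᵀ * G * V) (Uᵀ * G * V) := by
      rw [hPeq, frobInner_expand, t1, t2, t3, t5, t6, t9]; ring
    rw [frobNorm_sq, frobNorm_sq, frobNorm_sq, hPP]
    apply mul_le_mul_of_nonneg_left _ hσk.le
    have := frobInner_self_nonneg (Uᵀ * G * V)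
    linarith
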